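/- Let (R,Q,α) be a prelog ring and I_α ⊆ R the ideal generated by α(Q⁺), where Q⁺ is the set of non-invertible elements of Q. Then the natural map induces an isomorphism FΩ_{(R,Q,α)} ⊗_R R/I_α ≅ FΩ_{(R/I_α, Q, πα)}, where π: R → R/I_α is the quotient map. -/

import Mathlib

open scoped TensorProduct

/-- The polynomial `P(X,Y) = ((X+Y)^p - X^p - Y^p)/p` evaluated at `a, b`. -/
def fwP {R : Type*} [CommRing R] (p : ℕ) (a b : R) : R :=
  ∑ i ∈ Finset.Ioo 0 p, (Nat.choose p i / p : ℕ) • (a ^ i * b ^ (p - i))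

/-- A Frobenius–Witt derivation. -/
structure IsFWDerivation {R M : Type*} [CommRing R] [AddCommGroup M] [Module R M]
    (p : ℕ) (D : R → M) : Prop where
  map_add' : ∀ a b : R, D (a + b) = D a + D b - fwP p a b • D (p : R)
  map_mul' : ∀ a b : R, D (a * b) = b ^ p • D a + a ^ p • D b

/-- A logarithmic Frobenius–Witt derivation of the prelog ring `(R, Q, α)`. -/
structure IsLogFWDerivation {R M Q : Type*} [CommRing R] [AddCommGroup M] [Module R M]
    [CommMonoid Q] (p : ℕ) (α : Q →* R) (D : R → M) (δ : Q → M) : Prop where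
  toFW : IsFWDerivation p D
  map_one' : δ 1 = 0
  map_mul' : ∀ x y : Q, δ (x * y) = δ x + δ y
  compat : ∀ x : Q, D (α x) = α x ^ p • δ x

/-- The congruence on `Q` identifying elements differing by a unit;
its quotient is the sharpification `Q̄ = Q/Q^×`. -/
def sharpCon (Q : Type*) [CommMonoid Q] : Con Q where
  r x y := ∃ u : Qˣ, x = y * u
  iseqv := by
    refine ⟨fun x => ⟨1, by simp⟩, ?_, ?_⟩
    · rintro x y ⟨u, rfl⟩; exact ⟨u⁻¹, by simp⟩
    · rintro x y z ⟨u, rfl⟩ ⟨v, rfl⟩; exact ⟨v * u, by rw [Units.val_mul, mul_assoc]⟩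
  mul' := by
    rintro a b c d ⟨u, rfl⟩ ⟨v, rfl⟩
    exact ⟨u * v, by rw [Units.val_mul]; exact mul_mul_mul_comm b u d v⟩

/-- An ideal of a commutative monoid. -/
def IsMonIdeal {Q : Type*} [CommMonoid Q] (I : Set Q) : Prop :=
  ∀ a x : Q, x ∈ I → a * x ∈ I

/-- A prime ideal of a commutative monoid: an ideal whose complement is a submonoid. -/
def IsPrimeMonIdeal {Q : Type*} [CommMonoid Q] (I : Set Q) : Prop :=
  IsMonIdeal I ∧ (1 : Q) ∉ I ∧ ∀ x y : Q, x * y ∈ I → x ∈ I ∨ y ∈ I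

/-- The dimension of a commutative monoid: the Krull dimension of its poset of prime ideals. -/
noncomputable def monDim (Q : Type*) [CommMonoid Q] : WithBot (WithTop ℕ) :=
  Order.krullDim {I : Set Q // IsPrimeMonIdeal I}

/-- A commutative monoid is integral (cancellative). -/
def IsIntegralMon (Q : Type*) [CommMonoid Q] : Prop :=
  ∀ a b c : Q, a * b = a * c → b = c

/-- A commutative monoid is saturated: it is integral and whenever `x ∈ Q^{gp}` satisfies
`x^n ∈ Q` for some `n > 0`, then `x ∈ Q`; intrinsically, `a^n ∣ b^n → a ∣ b`. -/
def IsSaturatedMon (Q : Type*) [CommMonoid Q] : Prop :=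
  IsIntegralMon Q ∧ ∀ (a b : Q) (n : ℕ), 0 < n → a ^ n ∣ b ^ n → a ∣ b

/-- A commutative monoid is sharp if its only unit is `1`. -/
def IsSharpMon (Q : Type*) [CommMonoid Q] : Prop :=
  ∀ x : Q, IsUnit x → x = 1

/-- The ideal `I_α` of a prelog ring `(R, Q, α)`, generated by `α(Q⁺)`. -/
def prelogIdeal {R Q : Type*} [CommRing R] [CommMonoid Q] (α : Q →* R) : Ideal R :=
  Ideal.span (α '' {x : Q | ¬ IsUnit x})

/-- A Noetherian local ring is regular: its maximal ideal (= the ideal of nonunits) is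
generated by `dim R` elements. -/
def IsRegularLocal (S : Type*) [CommRing S] : Prop :=
  IsNoetherianRing S ∧ IsLocalRing S ∧
    ∃ (n : ℕ) (s : Fin n → S),
      Ideal.span (Set.range s) = Ideal.span {x : S | ¬ IsUnit x} ∧
      ringKrullDim S = (n : WithBot (WithTop ℕ))

/-- Log regularity of a local prelog ring `(R, Q, α)`. -/
def IsLogRegular {R Q : Type*} [CommRing R] [CommMonoid Q] (α : Q →* R) : Prop :=
  IsRegularLocal (R ⧸ prelogIdeal α) ∧
    ringKrullDim R = ringKrullDim (R ⧸ prelogIdeal α) + (by exact monDim Q : WithBot ℕ∞)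

/-! An `R/I_α`-module is killed by `I_α`. If `x ∈ Q` is not a unit, then `α(x) ∈ I_α`, so
`D(α x) = α(x)^p δ(x) = 0`. The Leibniz rule `D(ab) = b^p D(a) + a^p D(b)` and the additivity
rule, whose correction term `P(a,b) D(p)` lies in `I_α M = 0` as soon as `a` or `b` lies in
`I_α`, spread this vanishing from the generators `α(Q⁺)` to all of `I_α`. Hence `D` is
constant on cosets of `I_α` and descends to `R/I_α`; the axioms of a log FW-derivation are
unchanged by the descent because `R` acts on the module through `R/I_α`. -/

lemma fwP_map {R S : Type*} [CommRing R] [CommRing S] (f : R →+* S) (p : ℕ) (a b : R) :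
    fwP p (f a) (f b) = f (fwP p a b) := by
  simp [fwP, map_sum, map_mul, map_pow]

lemma fwP_mem_of_mem_right {R : Type*} [CommRing R] {I : Ideal R} (p : ℕ) (a : R) {b : R}
    (hb : b ∈ I) : fwP p a b ∈ I := by
  refine Submodule.sum_mem _ fun i hi => ?_
  obtain ⟨_, hip⟩ := Finset.mem_Ioo.mp hi
  rw [nsmul_eq_mul]
  exact I.mul_mem_left _ (I.mul_mem_left _ (I.pow_mem_of_mem hb _ (Nat.sub_pos_of_lt hip)))

lemma RingHom.ker_algebraMap_le_annihilator (R S M : Type*) [CommRing R] [CommRing S]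
    [Algebra R S] [AddCommGroup M] [Module R M] [Module S M] [IsScalarTower R S M] :
    RingHom.ker (algebraMap R S) ≤ Module.annihilator R M := by
  rw [RingHom.ker_eq_comap_bot, ← Module.comap_annihilator (R := S)]
  exact Ideal.comap_mono bot_le

namespace IsFWDerivation

variable {R M : Type*} [CommRing R] [AddCommGroup M] [Module R M] {p : ℕ} {D : R → M}

lemma map_zero (hp : p ≠ 0) (hD : IsFWDerivation p D) : D 0 = 0 := by
  simpa [zero_pow hp] using hD.map_mul' 0 0

variable {I : Ideal R}

lemma map_add_of_mem (hD : IsFWDerivation p D) (hI : I ≤ Module.annihilator R M) (a : R)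
    {b : R} (hb : b ∈ I) : D (a + b) = D a + D b := by
  rw [hD.map_add', Module.mem_annihilator.mp (hI (fwP_mem_of_mem_right p a hb)), sub_zero]

lemma map_eq_zero_of_mem_span (hp : p ≠ 0) (hD : IsFWDerivation p D) {s : Set R}
    (hI : Ideal.span s ≤ Module.annihilator R M) (hs : ∀ x ∈ s, D x = 0) :
    ∀ x ∈ Ideal.span s, D x = 0 := by
  intro x hx
  induction hx using Submodule.span_induction with
  | mem x hx => exact hs x hx
  | zero => exact hD.map_zero hp
  | add x y _ hy hDx hDy => rw [hD.map_add_of_mem hI x hy, hDx, hDy, add_zero]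
  | smul r x hx hDx =>
    rw [smul_eq_mul, hD.map_mul', hDx, smul_zero, add_zero,
      Module.mem_annihilator.mp (hI (Ideal.pow_mem_of_mem _ hx p (Nat.pos_of_ne_zero hp)))]

end IsFWDerivation

section Descent

variable {R S M : Type*} [CommRing R] [CommRing S] [Algebra R S] [AddCommGroup M] [Module R M]
  [Module S M] [IsScalarTower R S M] {p : ℕ}

lemma IsFWDerivation.comp_algebraMap {D : S → M} (hD : IsFWDerivation p D) :
    IsFWDerivation p (D ∘ algebraMap R S) where
  map_add' a b := by
    simp only [Function.comp_apply, map_add, hD.map_add', fwP_map, map_natCast, algebraMap_smul]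
  map_mul' a b := by
    simp only [Function.comp_apply, map_mul, hD.map_mul', ← map_pow, algebraMap_smul]

lemma IsFWDerivation.of_comp_algebraMap (hf : Function.Surjective (algebraMap R S)) {D : S → M}
    (hD : IsFWDerivation p (D ∘ algebraMap R S)) : IsFWDerivation p D where
  map_add' := hf.forall₂.2 fun a b => by
    simpa only [Function.comp_apply, map_add, fwP_map, map_natCast, algebraMap_smul]
      using hD.map_add' a b
  map_mul' := hf.forall₂.2 fun a b => by
    simpa only [Function.comp_apply, map_mul, ← map_pow, algebraMap_smul] using hD.map_mul' a b

lemma isLogFWDerivation_comp_algebraMap_iff (hf : Function.Surjective (algebraMap R S))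
    {Q : Type*} [CommMonoid Q] {α : Q →* R} {D : S → M} {δ : Q → M} :
    IsLogFWDerivation p ((algebraMap R S).toMonoidHom.comp α) D δ ↔
      IsLogFWDerivation p α (D ∘ algebraMap R S) δ := by
  have compat_iff : ∀ x : Q, D (algebraMap R S (α x)) = algebraMap R S (α x) ^ p • δ x ↔
      D (algebraMap R S (α x)) = α x ^ p • δ x := fun x => by
    rw [← map_pow, algebraMap_smul]
  exact ⟨fun h => ⟨h.toFW.comp_algebraMap, h.map_one', h.map_mul',
      fun x => (compat_iff x).1 (h.compat x)⟩,
    fun h => ⟨.of_comp_algebraMap hf h.toFW, h.map_one', h.map_mul',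
      fun x => (compat_iff x).2 (h.compat x)⟩⟩

end Descent

namespace IsLogFWDerivation

variable {R M Q : Type*} [CommRing R] [AddCommGroup M] [Module R M] [CommMonoid Q] {p : ℕ}
  {α : Q →* R} {D : R → M} {δ : Q → M}

lemma map_eq_zero_of_mem_prelogIdeal (hp : p ≠ 0) (hD : IsLogFWDerivation p α D δ)
    (hI : prelogIdeal α ≤ Module.annihilator R M) : ∀ x ∈ prelogIdeal α, D x = 0 := by
  refine hD.toFW.map_eq_zero_of_mem_span (s := α '' {x | ¬IsUnit x}) hp hI ?_
  rintro _ ⟨q, hq, rfl⟩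
  have hq : α q ∈ prelogIdeal α := Ideal.subset_span (Set.mem_image_of_mem α hq)
  rw [hD.compat,
    Module.mem_annihilator.mp (hI (Ideal.pow_mem_of_mem _ hq p (Nat.pos_of_ne_zero hp)))]

lemma factorsThrough_prelogIdeal (hp : p ≠ 0) (hD : IsLogFWDerivation p α D δ)
    (hI : prelogIdeal α ≤ Module.annihilator R M) :
    D.FactorsThrough (Ideal.Quotient.mk (prelogIdeal α)) := by
  intro a b hab
  obtain ⟨x, hx, rfl⟩ : ∃ x ∈ prelogIdeal α, b = a + x :=
    ⟨b - a, Ideal.Quotient.eq.mp hab.symm, (add_sub_cancel a b).symm⟩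
  rw [hD.toFW.map_add_of_mem hI a hx, hD.map_eq_zero_of_mem_prelogIdeal hp hI x hx, add_zero]

end IsLogFWDerivation

/-- The isomorphism `FΩ_{(R,Q,α)} ⊗_R R/I_α ≅ FΩ_{(R/I_α,Q,πα)}`, stated through the functors on
`R/I_α`-modules that the two sides represent. -/
theorem stmt11 (p : ℕ) (hp : p.Prime) {R Q : Type*} [CommRing R] [CommMonoid Q]
    (α : Q →* R)
    {M : Type*} [AddCommGroup M] [Module (R ⧸ prelogIdeal α) M] [Module R M]
    [IsScalarTower R (R ⧸ prelogIdeal α) M]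
    (D : R → M) (δ : Q → M) :
    IsLogFWDerivation p α D δ ↔
      ∃! D' : R ⧸ prelogIdeal α → M,
        IsLogFWDerivation p ((Ideal.Quotient.mk (prelogIdeal α)).toMonoidHom.comp α) D' δ ∧
        ∀ a : R, D' (Ideal.Quotient.mk (prelogIdeal α) a) = D a := by
  have hI : prelogIdeal α ≤ Module.annihilator R M := by
    simpa only [Ideal.Quotient.algebraMap_eq, Ideal.mk_ker] using
      RingHom.ker_algebraMap_le_annihilator R (R ⧸ prelogIdeal α) M
  have hsurj : Function.Surjective (Ideal.Quotient.mk (prelogIdeal α)) :=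
    Ideal.Quotient.mk_surjective
  constructor
  · intro hD
    have hfac := hD.factorsThrough_prelogIdeal hp.ne_zero hI
    set D' := Function.extend (Ideal.Quotient.mk (prelogIdeal α)) D 0
    have hD'D : D' ∘ Ideal.Quotient.mk (prelogIdeal α) = D := funext (hfac.extend_apply 0)
    exact ⟨D', ⟨(isLogFWDerivation_comp_algebraMap_iff hsurj).2 (hD'D ▸ hD), congrFun hD'D⟩,
      fun D'' hD'' => hsurj.injective_comp_right ((funext hD''.2).trans hD'D.symm)⟩
  · rintro ⟨D', ⟨hD', hD'D⟩, -⟩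
    rw [← funext hD'D]
    exact (isLogFWDerivation_comp_algebraMap_iff hsurj).1 hD'
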